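/- Let k, ℓ ∈ ℕ and let G be an ℓ-empty ordered graph. If the irreducible block decomposition of G contains a block of size at least 4kℓ, then S_n(G) ≥ F_{n,ℓ} for each n ≤ k. -/

import Mathlib

open Finset

/-- `IndSub G H` : `G` is an induced ordered subgraph of `H`, i.e. there is an
order-preserving injection of the vertices preserving adjacency and non-adjacency. -/
def IndSub {m n : ℕ} (G : SimpleGraph (Fin m)) (H : SimpleGraph (Fin n)) : Prop :=
  ∃ φ : Fin m ↪o Fin n, ∀ i j : Fin m, G.Adj i j ↔ H.Adj (φ i) (φ j)

/-- A hereditary property of ordered graphs: a family of ordered graphs (one set of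
graphs on `[n]` for each `n`), closed under taking induced ordered subgraphs.  (Closure
under order-preserving isomorphisms is automatic in this encoding, since the only
order-preserving bijection of `Fin n` is the identity.) -/
structure HerProp where
  mem : ∀ n : ℕ, Set (SimpleGraph (Fin n))
  hered : ∀ {m n : ℕ} (G : SimpleGraph (Fin m)) (H : SimpleGraph (Fin n)),
    IndSub G H → H ∈ mem n → G ∈ mem m

/-- The speed of a property: `n ↦ |P_n|`. -/
noncomputable def speed (P : HerProp) (n : ℕ) : ℕ := (P.mem n).ncard

/-- Generalized Fibonacci numbers `F_{n,k}` of order `k`: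
`F_{0,k} = 1`, `F_{n,k} = F_{n-1,k} + ⋯ + F_{n-k,k}` (terms with negative index are 0). -/
def genFib (k : ℕ) : ℕ → ℕ
  | 0 => 1
  | n + 1 => ∑ i ∈ Finset.range k, if i ≤ n then genFib k (n - i) else 0
decreasing_by omega

/-- `lHom G ℓ x y` : vertices `x` and `y` are `ℓ`-homogeneous in `G`
(`x ∼_ℓ y`), i.e. they have the same neighbourhoods outside `N_ℓ(x) ∪ N_ℓ(y)`. -/
def lHom {N : ℕ} (G : SimpleGraph (Fin N)) (ℓ : ℕ) (x y : Fin N) : Prop :=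
  ∀ v : Fin N, ℓ ≤ ((v : ℤ) - (x : ℤ)).natAbs → ℓ ≤ ((v : ℤ) - (y : ℤ)).natAbs →
    (G.Adj x v ↔ G.Adj y v)

/-- `G` contains a `k`-structure of Type 1. -/
def HasType1 {N : ℕ} (G : SimpleGraph (Fin N)) (k : ℕ) : Prop :=
  ∃ (y : Fin N) (x : Fin (2 * k) → Fin N), StrictMono x ∧
    ((∀ i, y < x i) ∨ (∀ i, x i < y)) ∧
    ∀ i j : Fin (2 * k), (j : ℕ) = (i : ℕ) + 1 → (G.Adj y (x i) ↔ ¬ G.Adj y (x j))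

/-- `G` contains a `k`-structure of Type 2 (2(a) or 2(b)). -/
def HasType2 {N : ℕ} (G : SimpleGraph (Fin N)) (k : ℕ) : Prop :=
  ∃ x y : Fin (2 * k) → Fin N, StrictMono x ∧ (StrictMono y ∨ StrictAnti y) ∧
    (∀ i j, x i < y j) ∧
    ∀ i j : Fin (2 * k), (j : ℕ) = (i : ℕ) + 1 → (G.Adj (x i) (y i) ↔ ¬ G.Adj (x j) (y j))

/-- `G` contains a `(k,ℓ)`-structure of Type 3. -/
def HasType3 {N : ℕ} (G : SimpleGraph (Fin N)) (k ℓ : ℕ) : Prop :=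
  ∃ (x y : Fin (2 * k) → Fin N) (z : Fin (2 * k) → Fin (ℓ - 1) → Fin N),
    (∀ i t, x i < z i t) ∧ (∀ i, StrictMono (z i)) ∧ (∀ i t, z i t < y i) ∧
    (∀ i, x i < y i) ∧
    (∀ i j : Fin (2 * k), (j : ℕ) = (i : ℕ) + 1 → y i < x j) ∧
    ∀ i j : Fin (2 * k), (j : ℕ) = (i : ℕ) + 1 → (G.Adj (x i) (y i) ↔ ¬ G.Adj (x j) (y j))

/-- `S_n(G)` : the number of pairwise non-isomorphic (as ordered graphs) induced ordered
subgraphs of `G` of order `n`. -/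
noncomputable def numSub {N : ℕ} (G : SimpleGraph (Fin N)) (n : ℕ) : ℕ :=
  {H : SimpleGraph (Fin n) | IndSub H G}.ncard
/-- The ordered graph `M^<_I(X,Y)` with `|X| = |Y| = m` (vertices `0,…,m-1` playing the
role of `x_1 < … < x_m` and vertices `m,…,2m-1` the role of `y_1 < … < y_m`). -/
def Mlt (m : ℕ) (I1 I2 I3 I4 : Bool) : SimpleGraph (Fin (2 * m)) :=
  SimpleGraph.fromRel (fun u v =>
    ((u : ℕ) < m ∧ (v : ℕ) < m ∧ I1 = true) ∨
    (m ≤ (u : ℕ) ∧ m ≤ (v : ℕ) ∧ I4 = true) ∨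
    ((u : ℕ) < m ∧ m ≤ (v : ℕ) ∧
      (((u : ℕ) < (v : ℕ) - m ∧ I2 = true) ∨
       ((v : ℕ) - m < (u : ℕ) ∧ I3 = true) ∨
       ((u : ℕ) = (v : ℕ) - m ∧ Even (u : ℕ)))))

/-- The ordered graph `M^>_I(X,Y)`: as `M^<_I(X,Y)` but with the `y`-indices reversed,
i.e. vertex `m + p` plays the role of `y_{m-p}` (so that `y_1 > y_2 > … > y_m`). -/
def Mgt (m : ℕ) (I1 I2 I3 I4 : Bool) : SimpleGraph (Fin (2 * m)) :=
  SimpleGraph.fromRel (fun u v =>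
    ((u : ℕ) < m ∧ (v : ℕ) < m ∧ I1 = true) ∨
    (m ≤ (u : ℕ) ∧ m ≤ (v : ℕ) ∧ I4 = true) ∨
    ((u : ℕ) < m ∧ m ≤ (v : ℕ) ∧
      (((u : ℕ) < 2 * m - 1 - (v : ℕ) ∧ I2 = true) ∨
       (2 * m - 1 - (v : ℕ) < (u : ℕ) ∧ I3 = true) ∨
       ((u : ℕ) = 2 * m - 1 - (v : ℕ) ∧ Even (u : ℕ)))))

/-- `B` is a set of consecutive vertices which is pairwise 1-homogeneous. -/
def IsHomInterval {N : ℕ} (G : SimpleGraph (Fin N)) (B : Set (Fin N)) : Prop :=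
  (∀ x y z : Fin N, x ∈ B → z ∈ B → x ≤ y → y ≤ z → y ∈ B) ∧
  (∀ x ∈ B, ∀ y ∈ B, lHom G 1 x y)

/-- A homogeneous block of `G`: a maximal 1-homogeneous set of consecutive vertices. -/
def IsHomBlock {N : ℕ} (G : SimpleGraph (Fin N)) (B : Set (Fin N)) : Prop :=
  B.Nonempty ∧ IsHomInterval G B ∧ ∀ B' : Set (Fin N), B ⊆ B' → IsHomInterval G B' → B = B'

/-- `G` has at most `k` homogeneous blocks. -/
def HomBlocksLE {N : ℕ} (G : SimpleGraph (Fin N)) (k : ℕ) : Prop :=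
  {B : Set (Fin N) | IsHomBlock G B}.ncard ≤ k

/-- `TailBound G k M` : the homogeneous block sequence `t_1 ≥ t_2 ≥ …` of `G` satisfies
`Σ_{i=k+2}^∞ t_i ≤ M`, i.e. some (equivalently, the largest) `k+1` homogeneous blocks
cover all but at most `M` vertices. -/
def TailBound {N : ℕ} (G : SimpleGraph (Fin N)) (k M : ℕ) : Prop :=
  ∃ S : Finset (Set (Fin N)), S.card ≤ k + 1 ∧ (∀ B ∈ S, IsHomBlock G B) ∧
    {v : Fin N | ∀ B ∈ S, v ∉ B}.ncard ≤ M

/-- An ordered graph is irreducible if no pair of vertices `u < v` separates its edges. -/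
def IrredGraph {N : ℕ} (G : SimpleGraph (Fin N)) : Prop :=
  ¬ ∃ u v : Fin N, u < v ∧
      ∀ i j : Fin N, i < j → G.Adj i j → ((j : ℕ) ≤ (u : ℕ) ∨ (v : ℕ) ≤ (i : ℕ))

/-- `G` is `ℓ`-empty: it has no edges of length at least `ℓ`. -/
def lEmpty {N : ℕ} (G : SimpleGraph (Fin N)) (ℓ : ℕ) : Prop :=
  ∀ u v : Fin N, G.Adj u v → ((u : ℤ) - (v : ℤ)).natAbs < ℓ

/-- `IsFamSum G sz Gs` : `G = G_1 + … + G_s`, the consecutive sum of the ordered graphs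
`Gs 0, …, Gs (s-1)` (of orders `sz 0, …, sz (s-1)`), with no edges between summands. -/
def IsFamSum {N s : ℕ} (G : SimpleGraph (Fin N)) (sz : Fin s → ℕ)
    (Gs : ∀ i, SimpleGraph (Fin (sz i))) : Prop :=
  N = ∑ i, sz i ∧
  ∀ u v : Fin N, G.Adj u v ↔ ∃ (i : Fin s) (x y : Fin (sz i)),
    (Gs i).Adj x y ∧
    (u : ℕ) = (∑ j ∈ Finset.univ.filter (fun j => j < i), sz j) + (x : ℕ) ∧
    (v : ℕ) = (∑ j ∈ Finset.univ.filter (fun j => j < i), sz j) + (y : ℕ)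

/-- `(Gs 0, …, Gs (s-1))` is the irreducible block decomposition of `G`:
`G = G_1 + ⋯ + G_s` with every block nonempty and irreducible.  (Such a
decomposition is unique.) -/
def IsIrredDecomp {N s : ℕ} (G : SimpleGraph (Fin N)) (sz : Fin s → ℕ)
    (Gs : ∀ i, SimpleGraph (Fin (sz i))) : Prop :=
  IsFamSum G sz Gs ∧ (∀ i, 1 ≤ sz i) ∧ ∀ i, IrredGraph (Gs i)

/-- `J_1^{(n)} = K_n`. -/
def Jgraph1 (n : ℕ) : SimpleGraph (Fin n) := ⊤

/-- `J_2^{(n)}` : single edge `{1,n}`. -/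
def Jgraph2 (n : ℕ) : SimpleGraph (Fin n) :=
  SimpleGraph.fromRel (fun u v => (u : ℕ) = 0 ∧ (v : ℕ) = n - 1)

/-- `J_3^{(n)}` : star at the first vertex. -/
def Jgraph3 (n : ℕ) : SimpleGraph (Fin n) :=
  SimpleGraph.fromRel (fun u _ => (u : ℕ) = 0)

/-- `J_4^{(n)}` : star at the last vertex. -/
def Jgraph4 (n : ℕ) : SimpleGraph (Fin n) :=
  SimpleGraph.fromRel (fun _ v => (v : ℕ) = n - 1)

/-- `L^{(n)}` : the monotone path. -/
def Lgraph (n : ℕ) : SimpleGraph (Fin n) :=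
  SimpleGraph.fromRel (fun u v => (v : ℕ) = (u : ℕ) + 1)

/-- `Q_1` : edge set `{13, 24}` on `[4]`. -/
def Qgraph1 : SimpleGraph (Fin 4) :=
  SimpleGraph.fromRel (fun u v => ((u : ℕ) = 0 ∧ (v : ℕ) = 2) ∨ ((u : ℕ) = 1 ∧ (v : ℕ) = 3))

/-- `Q_2` : edge set `{14, 23}` on `[4]`. -/
def Qgraph2 : SimpleGraph (Fin 4) :=
  SimpleGraph.fromRel (fun u v => ((u : ℕ) = 0 ∧ (v : ℕ) = 3) ∨ ((u : ℕ) = 1 ∧ (v : ℕ) = 2))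

/-- `G` is order-isomorphic to a member of the family `𝒥`. -/
def InJ {n : ℕ} (G : SimpleGraph (Fin n)) : Prop :=
  G = Jgraph1 n ∨ G = Jgraph2 n ∨ G = Jgraph3 n ∨ G = Jgraph4 n ∨ G = Lgraph n ∨
  (n = 4 ∧ IndSub G Qgraph1) ∨ (n = 4 ∧ IndSub G Qgraph2)

/-- `G` is order-isomorphic to a member of `𝒥_ℓ`. -/
def InJle (ℓ : ℕ) {n : ℕ} (G : SimpleGraph (Fin n)) : Prop :=
  (n ≤ ℓ ∧ (G = Jgraph1 n ∨ G = Jgraph2 n ∨ G = Jgraph3 n ∨ G = Jgraph4 n ∨ G = Lgraph n)) ∨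
  (4 ≤ ℓ ∧ n = 4 ∧ (IndSub G Qgraph1 ∨ IndSub G Qgraph2))

/-- `A` is a sum `B_1 + ⋯ + B_t` of members of `𝒥_ℓ` which are pairwise comparable in
the induced ordered subgraph order. -/
def InJA (ℓ : ℕ) {n : ℕ} (A : SimpleGraph (Fin n)) : Prop :=
  ∃ (t : ℕ) (sz : Fin t → ℕ) (Bs : ∀ j, SimpleGraph (Fin (sz j))),
    IsFamSum A sz Bs ∧ (∀ j, InJle ℓ (Bs j)) ∧
    ∀ j j', IndSub (Bs j) (Bs j') ∨ IndSub (Bs j') (Bs j)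

/-- `G ∈ 𝒥(k,ℓ)`. -/
def InJkl (k ℓ : ℕ) {n : ℕ} (G : SimpleGraph (Fin n)) : Prop :=
  ∃ (s : ℕ) (sz : Fin s → ℕ) (As : ∀ i, SimpleGraph (Fin (sz i))),
    s ≤ k ∧ IsFamSum G sz As ∧ ∀ i, InJA ℓ (As i)


/-! ### Auxiliary machinery for `big_irreducible_block` -/

namespace BBMaux

open Finset

/-- Compositions of `n` into parts in `[1, ℓ]`, as lists. -/
def comps (ℓ : ℕ) : ℕ → Finset (List ℕ)
  | 0 => {[]}
  | n + 1 => (Finset.range ℓ).biUnion fun i =>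
      if h : i ≤ n then ((comps ℓ (n - i)).image fun L => (i + 1) :: L) else ∅
decreasing_by omega

lemma comps_card (ℓ n : ℕ) : (comps ℓ n).card = genFib ℓ n := by
  induction n using Nat.strong_induction_on with
  | _ n ih =>
    match n with
    | 0 => simp [comps, genFib]
    | n + 1 =>
      rw [comps, genFib, Finset.card_biUnion]
      · apply Finset.sum_congr rfl
        intro i hi
        by_cases h : i ≤ n
        · rw [dif_pos h, if_pos h,
            Finset.card_image_of_injective _ (by intro a b hab; simpa using hab)]
          exact ih (n - i) (by omega)
        · rw [dif_neg h, if_neg h, Finset.card_empty]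
      · intro a _ b _ hab
        simp only [Finset.disjoint_left]
        intro L hL hL'
        by_cases ha : a ≤ n
        · rw [dif_pos ha] at hL
          by_cases hb : b ≤ n
          · rw [dif_pos hb] at hL'
            simp only [Finset.mem_image] at hL hL'
            obtain ⟨La, _, rfl⟩ := hL
            obtain ⟨Lb, _, h2⟩ := hL'
            exact hab (by simp at h2; omega)
          · rw [dif_neg hb] at hL'; exact absurd hL' (Finset.notMem_empty _)
        · rw [dif_neg ha] at hL; exact absurd hL (Finset.notMem_empty _)

lemma mem_comps {ℓ n : ℕ} {L : List ℕ} (h : L ∈ comps ℓ n) :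
    (∀ a ∈ L, 1 ≤ a ∧ a ≤ ℓ) ∧ L.sum = n := by
  induction n using Nat.strong_induction_on generalizing L with
  | _ n ih =>
    match n with
    | 0 =>
      simp [comps] at h; subst h; simp
    | n + 1 =>
      rw [comps, Finset.mem_biUnion] at h
      obtain ⟨i, hi, hL⟩ := h
      rw [Finset.mem_range] at hi
      by_cases hin : i ≤ n
      · rw [dif_pos hin, Finset.mem_image] at hL
        obtain ⟨L', hL', rfl⟩ := hL
        obtain ⟨h1, h2⟩ := ih (n - i) (by omega) hL'
        refine ⟨?_, by simp [h2]; omega⟩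
        intro a ha
        rcases List.mem_cons.mp ha with rfl | ha
        · omega
        · exact h1 a ha
      · rw [dif_neg hin] at hL; exact absurd hL (Finset.notMem_empty _)

/-- `g` is a proper boundary (partial sum) of the composition `L`. -/
def isBnd (L : List ℕ) (g : ℕ) : Prop :=
  ∃ L1 L2 : List ℕ, L1 ≠ [] ∧ L2 ≠ [] ∧ L = L1 ++ L2 ∧ L1.sum = g

lemma isBnd_nil (g : ℕ) : ¬ isBnd [] g := by
  rintro ⟨L1, L2, h1, h2, heq, -⟩
  rcases List.append_eq_nil_iff.mp heq.symm with ⟨rfl, -⟩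
  exact h1 rfl

lemma isBnd_pos {L : List ℕ} {g : ℕ} (hpos : ∀ a ∈ L, 1 ≤ a) (h : isBnd L g) :
    0 < g ∧ g < L.sum := by
  obtain ⟨L1, L2, h1, h2, rfl, rfl⟩ := h
  constructor
  · rcases L1 with _ | ⟨a, t⟩
    · exact absurd rfl h1
    · have : 1 ≤ a := hpos a (by simp)
      simp; omega
  · rcases L2 with _ | ⟨a, t⟩
    · exact absurd rfl h2
    · have : 1 ≤ a := hpos a (by simp)
      simp; omega

lemma isBnd_cons {a : ℕ} {r : List ℕ} {g : ℕ} (hpos : ∀ x ∈ r, 1 ≤ x) :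
    isBnd (a :: r) g ↔ (r ≠ [] ∧ g = a) ∨ (a < g ∧ isBnd r (g - a)) := by
  constructor
  · rintro ⟨L1, L2, h1, h2, heq, rfl⟩
    rcases L1 with _ | ⟨b, s⟩
    · exact absurd rfl h1
    · simp only [List.cons_append, List.cons.injEq] at heq
      obtain ⟨rfl, heq⟩ := heq
      rcases s with _ | ⟨c, t⟩
      · left
        refine ⟨?_, by simp⟩
        simp at heq; subst heq; exact h2
      · right
        have hb : isBnd r ((c :: t).sum) := ⟨c :: t, L2, by simp, h2, heq, rfl⟩
        have hc : 1 ≤ c := hpos c (by rw [heq]; simp)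
        refine ⟨by simp; omega, ?_⟩
        simpa using hb
  · rintro (⟨hr, hg⟩ | ⟨hlt, L1, L2, h1, h2, hr, hsum⟩)
    · exact ⟨[a], r, by simp, hr, by simp, by simp [hg]⟩
    · subst hr
      exact ⟨a :: L1, L2, by simp, h2, by simp, by simp [List.sum_cons, hsum]; omega⟩

/-- Two positive compositions with the same sum and the same boundary sets are equal. -/
lemma comp_unique : ∀ (L L' : List ℕ), (∀ a ∈ L, 1 ≤ a) → (∀ a ∈ L', 1 ≤ a) →
    L.sum = L'.sum → (∀ g, isBnd L g ↔ isBnd L' g) → L = L' := by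
  intro L
  induction L with
  | nil =>
    intro L' _ hpos' hsum _
    rcases L' with _ | ⟨a, t⟩
    · rfl
    · have : 1 ≤ a := hpos' a (by simp)
      simp at hsum; omega
  | cons a r ih =>
    intro L' hpos hpos' hsum hbnd
    rcases L' with _ | ⟨a', r'⟩
    · have : 1 ≤ a := hpos a (by simp)
      simp at hsum; omega
    · have hposr : ∀ x ∈ r, 1 ≤ x := fun x hx => hpos x (by simp [hx])
      have hposr' : ∀ x ∈ r', 1 ≤ x := fun x hx => hpos' x (by simp [hx])
      have ha : 1 ≤ a := hpos a (by simp)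
      have ha' : 1 ≤ a' := hpos' a' (by simp)
      have key : ∀ (b b' : ℕ) (s s' : List ℕ), 1 ≤ b → 1 ≤ b' → (∀ x ∈ s, 1 ≤ x) →
          (∀ x ∈ s', 1 ≤ x) → (b :: s).sum = (b' :: s').sum →
          (∀ g, isBnd (b :: s) g ↔ isBnd (b' :: s') g) → ¬ b < b' := by
        intro b b' s s' hb hb' hs hs' hsum hbnd hlt
        rcases s with _ | ⟨c, t⟩
        · simp at hsum; omega
        · have hbnd1 : isBnd (b :: c :: t) b :=
            ⟨[b], c :: t, by simp, by simp, by simp, by simp⟩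
          have := (hbnd b).mp hbnd1
          rw [isBnd_cons hs'] at this
          rcases this with ⟨_, h⟩ | ⟨h, _⟩ <;> omega
      have haa : a = a' := by
        have h1 := key a a' r r' ha ha' hposr hposr' hsum hbnd
        have h2 := key a' a r' r ha' ha hposr' hposr hsum.symm (fun g => (hbnd g).symm)
        omega
      subst haa
      have hsumr : r.sum = r'.sum := by simp at hsum; omega
      have hbndr : ∀ g, isBnd r g ↔ isBnd r' g := by
        intro g
        by_cases hg : 0 < g
        · have h1 : isBnd r g ↔ isBnd (a :: r) (a + g) := by
            rw [isBnd_cons hposr]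
            constructor
            · intro h; right; constructor; omega; simpa using h
            · rintro (⟨_, h⟩ | ⟨_, h⟩); omega; simpa using h
          have h2 : isBnd r' g ↔ isBnd (a :: r') (a + g) := by
            rw [isBnd_cons hposr']
            constructor
            · intro h; right; constructor; omega; simpa using h
            · rintro (⟨_, h⟩ | ⟨_, h⟩); omega; simpa using h
          rw [h1, h2, hbnd]
        · constructor
          · intro h; exact absurd (isBnd_pos hposr h).1 hg
          · intro h; exact absurd (isBnd_pos hposr' h).1 hg
      rw [ih r' hposr hposr' hsumr hbndr]

lemma len_le_sum : ∀ {L : List ℕ}, (∀ a ∈ L, 1 ≤ a) → L.length ≤ L.sum := by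
  intro L
  induction L with
  | nil => simp
  | cons a r ih =>
    intro h
    have h1 : 1 ≤ a := h a (by simp)
    have h2 := ih (fun x hx => h x (by simp [hx]))
    simp only [List.length_cons, List.sum_cons]
    omega

section Chain

variable (A : ℕ → ℕ → Prop) (ℓ c m k : ℕ)
variable (hℓ : 1 ≤ ℓ) (hm : 4 * k * ℓ ≤ m)
variable (hshort : ∀ u v, A u v → u < v ∧ v < u + ℓ)
variable (hcross : ∀ g, c ≤ g → g + 1 < c + m →
  ∃ u v, c ≤ u ∧ u ≤ g ∧ g < v ∧ v < c + m ∧ A u v)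

include hℓ hshort hcross in
lemma chain : ∀ a, 2 ≤ a → a ≤ ℓ → ∀ q, c ≤ q → q + 2 * ℓ ≤ c + m →
    ∃ (T : Finset ℕ) (mn mx : ℕ),
      mn ∈ T ∧ mx ∈ T ∧ (∀ v ∈ T, mn ≤ v ∧ v ≤ mx) ∧ T.card ≤ a ∧
      mn + (a - 1) ≤ mx ∧ q + 2 ≤ mn + ℓ ∧ mn ≤ q ∧ q < mx ∧ mx + 3 ≤ q + ℓ + a ∧
      (∀ p, mn ≤ p → p < mx → ∃ u ∈ T, ∃ v ∈ T, u ≤ p ∧ p < v ∧ A u v) := by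
  intro a ha
  induction a, ha using Nat.le_induction with
  | base =>
    intro _ q hq hq2
    obtain ⟨u, v, hcu, hug, hgv, hvm, hA⟩ := hcross q hq (by omega)
    obtain ⟨huv, hvu⟩ := hshort u v hA
    refine ⟨{u, v}, u, v, by simp, by simp, ?_, ?_, by omega, by omega, by omega,
      by omega, by omega, ?_⟩
    · intro x hx; simp at hx; rcases hx with rfl | rfl <;> omega
    · exact (Finset.card_insert_le _ _).trans (by simp)
    · intro p hp1 hp2
      exact ⟨u, by simp, v, by simp, hp1, by omega, hA⟩
  | succ a ha ih =>
    intro haℓ q hq hq2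
    obtain ⟨T, mn, mx, hmn, hmx, hbnd, hcard, hspan, h1, h2, h3, h4, hcov⟩ :=
      ih (by omega) q hq hq2
    by_cases hbig : mn + a ≤ mx
    · exact ⟨T, mn, mx, hmn, hmx, hbnd, by omega, by omega, h1, h2, h3, by omega, hcov⟩
    · have hspan' : mx = mn + (a - 1) := by omega
      obtain ⟨x, y, hcx, hxmx, hmxy, hym, hA⟩ := hcross mx (by omega) (by omega)
      obtain ⟨hxy, hyx⟩ := hshort x y hA
      by_cases hxmn : x < mn
      · refine ⟨{x, y}, x, y, by simp, by simp, ?_, ?_, by omega, by omega, by omega,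
          by omega, by omega, ?_⟩
        · intro v hv; simp at hv; rcases hv with rfl | rfl <;> omega
        · exact (Finset.card_insert_le _ _).trans (by simp; omega)
        · intro p hp1 hp2
          exact ⟨x, by simp, y, by simp, hp1, by omega, hA⟩
      · push_neg at hxmn
        have hycard : (insert x (insert y T)).card ≤ a + 1 := by
          by_cases hxT : x ∈ T
          · rw [Finset.insert_eq_self.mpr (by simp [hxT])]
            exact (Finset.card_insert_le _ _).trans (by omega)
          · have hsub : T ⊆ Finset.Icc mn mx := by
              intro v hv; rw [Finset.mem_Icc]; exact hbnd v hv
            have hson : T ⊂ Finset.Icc mn mx := by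
              refine ⟨hsub, fun hcon => hxT (hcon (by rw [Finset.mem_Icc]; omega))⟩
            have := Finset.card_lt_card hson
            rw [Nat.card_Icc] at this
            calc (insert x (insert y T)).card ≤ (insert y T).card + 1 :=
                  Finset.card_insert_le _ _
              _ ≤ T.card + 2 := by have := Finset.card_insert_le y T; omega
              _ ≤ a + 1 := by omega
        refine ⟨insert x (insert y T), mn, y,
          by simp [Finset.mem_insert.mpr (Or.inr (Finset.mem_insert.mpr (Or.inr hmn)))],
          by simp, ?_, hycard, by omega, by omega, by omega, by omega, by omega, ?_⟩
        · intro v hv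
          simp at hv
          rcases hv with rfl | rfl | hv
          · omega
          · omega
          · have := hbnd v hv; omega
        · intro p hp1 hp2
          by_cases hpmx : p < mx
          · obtain ⟨u, hu, v, hv, h5, h6, h7⟩ := hcov p hp1 hpmx
            exact ⟨u, by simp [hu], v, by simp [hv], h5, h6, h7⟩
          · exact ⟨x, by simp, y, by simp, by omega, by omega, hA⟩

include hℓ hm hshort hcross in
lemma window : ∀ j a, 1 ≤ a → a ≤ ℓ → j < k →
    ∃ S : Finset ℕ, S.card = a ∧
      (∀ v ∈ S, c + 4 * ℓ * j + 2 ≤ v ∧ v ≤ c + 4 * ℓ * j + 3 * ℓ) ∧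
      (∀ p₁ ∈ S, ∀ p₂ ∈ S, p₁ < p₂ →
        ∃ u ∈ S, ∃ v ∈ S, u ≤ p₁ ∧ p₁ < v ∧ A u v) := by
  intro j a ha1 ha2 hjk
  have hj4 : 4 * ℓ * j + 4 * ℓ ≤ 4 * k * ℓ := by nlinarith
  by_cases ha : a = 1
  · subst ha
    refine ⟨{c + 4 * ℓ * j + 2}, by simp, by simp; omega, ?_⟩
    intro p₁ hp₁ p₂ hp₂ h
    simp at hp₁ hp₂; omega
  · have ha2' : 2 ≤ a := by omega
    obtain ⟨T, mn, mx, hmn, hmx, hbnd, hcard, hspan, h1, h2, h3, h4, hcov⟩ :=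
      chain A ℓ c m hℓ hshort hcross a ha2' ha2 (c + 4 * ℓ * j + ℓ) (by omega) (by omega)
    obtain ⟨S, hTS, hSIcc, hScard⟩ := Finset.exists_subsuperset_card_eq
      (show T ⊆ Finset.Icc mn mx by intro v hv; rw [Finset.mem_Icc]; exact hbnd v hv)
      hcard (by rw [Nat.card_Icc]; omega)
    refine ⟨S, hScard, ?_, ?_⟩
    · intro v hv
      have := Finset.mem_Icc.mp (hSIcc hv)
      omega
    · intro p₁ hp₁ p₂ hp₂ hlt
      have hb₁ := Finset.mem_Icc.mp (hSIcc hp₁)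
      have hb₂ := Finset.mem_Icc.mp (hSIcc hp₂)
      obtain ⟨u, hu, v, hv, h5, h6, h7⟩ := hcov p₁ (by omega) (by omega)
      exact ⟨u, hTS hu, v, hTS hv, h5, h6, h7⟩

variable (hwindow : ∀ j a, 1 ≤ a → a ≤ ℓ → j < k →
    ∃ S : Finset ℕ, S.card = a ∧
      (∀ v ∈ S, c + 4 * ℓ * j + 2 ≤ v ∧ v ≤ c + 4 * ℓ * j + 3 * ℓ) ∧
      (∀ p₁ ∈ S, ∀ p₂ ∈ S, p₁ < p₂ →
        ∃ u ∈ S, ∃ v ∈ S, u ≤ p₁ ∧ p₁ < v ∧ A u v))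

set_option linter.unusedSectionVars false in
include hℓ hshort hwindow in
lemma build : ∀ (L : List ℕ) (j : ℕ), (∀ a ∈ L, 1 ≤ a ∧ a ≤ ℓ) → j + L.length ≤ k →
    ∃ lV : List ℕ, lV.length = L.sum ∧ lV.Pairwise (· < ·) ∧
      (∀ v ∈ lV, c + 4 * ℓ * j + 2 ≤ v ∧ v + ℓ ≤ c + 4 * ℓ * (j + L.length)) ∧
      (∀ g, 0 < g → g < L.sum → ¬ isBnd L g →
        ∃ (p q : ℕ) (hp : p < lV.length) (hq : q < lV.length),
          p < g ∧ g ≤ q ∧ A (lV[p]'hp) (lV[q]'hq)) ∧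
      (∀ g, isBnd L g → ∀ (p q : ℕ) (hp : p < lV.length) (hq : q < lV.length),
          p < g → g ≤ q → ¬ A (lV[p]'hp) (lV[q]'hq)) := by
  intro L
  induction L with
  | nil =>
    intro j _ _
    exact ⟨[], by simp, by simp, by simp, by intro g hg hg'; simp at hg',
      by intro g hg; exact absurd hg (isBnd_nil g)⟩
  | cons a r ih =>
    intro j hparts hlen
    have hposr : ∀ x ∈ r, 1 ≤ x := fun x hx => (hparts x (by simp [hx])).1
    have ha1 : 1 ≤ a := (hparts a (by simp)).1
    have ha2 : a ≤ ℓ := (hparts a (by simp)).2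
    obtain ⟨S, hScard, hSbnd, hScov⟩ := hwindow j a ha1 ha2 (by simp at hlen; omega)
    set hd : List ℕ := S.sort (· ≤ ·) with hhd
    have hhdlen : hd.length = a := by rw [hhd, Finset.length_sort, hScard]
    have hhdsorted : hd.Pairwise (· < ·) := (Finset.sortedLT_sort S).pairwise
    have hhdmem : ∀ v, v ∈ hd ↔ v ∈ S := fun v => Finset.mem_sort _
    obtain ⟨tl, htlen, htsorted, htbnd, htC1, htC2⟩ :=
      ih (j + 1) (fun x hx => hparts x (by simp [hx])) (by simp at hlen ⊢; omega)
    refine ⟨hd ++ tl, ?_, ?_, ?_, ?_, ?_⟩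
    · simp [hhdlen, htlen]
    · rw [List.pairwise_append]
      refine ⟨hhdsorted, htsorted, ?_⟩
      intro x hx y hy
      have h1 := (hSbnd x ((hhdmem x).mp hx)).2
      have h2 := (htbnd y hy).1
      have e1 : 4 * ℓ * (j + 1) = 4 * ℓ * j + 4 * ℓ := by ring
      omega
    · intro v hv
      simp only [List.length_cons]
      rcases List.mem_append.mp hv with h | h
      · obtain ⟨hb1, hb2⟩ := hSbnd v ((hhdmem v).mp h)
        have e1 : 4 * ℓ * (j + (r.length + 1)) = 4 * ℓ * j + 4 * ℓ * r.length + 4 * ℓ := by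
          ring
        omega
      · obtain ⟨hb1, hb2⟩ := htbnd v h
        have e1 : 4 * ℓ * (j + 1) = 4 * ℓ * j + 4 * ℓ := by ring
        have e2 : 4 * ℓ * (j + 1 + r.length) = 4 * ℓ * (j + (r.length + 1)) := by ring
        omega
    · -- C1
      intro g hg0 hgsum hnb
      simp only [List.sum_cons] at hgsum
      rw [isBnd_cons hposr] at hnb
      push_neg at hnb
      by_cases hga : g < a
      · have hg1 : g - 1 < hd.length := by omega
        have hg2 : g < hd.length := by omega
        have hmem1 : hd[g-1] ∈ S := (hhdmem _).mp (List.getElem_mem hg1)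
        have hmem2 : hd[g] ∈ S := (hhdmem _).mp (List.getElem_mem hg2)
        have hlt : hd[g-1] < hd[g] := List.Pairwise.rel_get_of_lt hhdsorted (by simp; omega)
        obtain ⟨u, hu, v, hv, huleq, hvgt, hA⟩ := hScov _ hmem1 _ hmem2 hlt
        obtain ⟨pu, hpu, hpueq⟩ := List.mem_iff_getElem.mp ((hhdmem u).mpr hu)
        obtain ⟨qv, hqv, hqveq⟩ := List.mem_iff_getElem.mp ((hhdmem v).mpr hv)
        have hpug : pu < g := by
          by_contra hcon
          push_neg at hcon
          have hgp : g - 1 < pu := by omega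
          have h2 := hhdsorted.rel_get_of_lt
            (show (⟨g-1, hg1⟩ : Fin hd.length) < ⟨pu, hpu⟩ from Fin.mk_lt_mk.mpr hgp)
          simp only [List.get_eq_getElem] at h2
          omega
        have hqvg : g ≤ qv := by
          by_contra hcon
          push_neg at hcon
          have horder : hd[qv] ≤ hd[g-1] := by
            rcases Nat.lt_or_ge qv (g-1) with h | h
            · have h2 := hhdsorted.rel_get_of_lt
                (show (⟨qv, hqv⟩ : Fin hd.length) < ⟨g-1, hg1⟩ from Fin.mk_lt_mk.mpr h)
              simp only [List.get_eq_getElem] at h2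
              omega
            · have : qv = g - 1 := by omega
              subst this; rfl
          omega
        have hlenapp : (hd ++ tl).length = a + r.sum := by
          rw [List.length_append, hhdlen, htlen]
        refine ⟨pu, qv, by rw [hlenapp]; omega, by rw [hlenapp]; omega,
          hpug, hqvg, ?_⟩
        rw [List.getElem_append_left (by omega), List.getElem_append_left (by omega),
          hpueq, hqveq]
        exact hA
      · have hgane : g ≠ a := by
          rintro rfl
          have hrne : r ≠ [] := by
            rintro rfl
            simp only [List.sum_nil] at hgsum
            omega
          exact (hnb.1 hrne) rfl
        have hga' : a < g := by omega
        have hnbr : ¬ isBnd r (g - a) := hnb.2 hga'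
        obtain ⟨p', q', hp', hq', hpg', hgq', hA⟩ :=
          htC1 (g - a) (by omega) (by omega) hnbr
        have hlenapp : (hd ++ tl).length = a + r.sum := by
          rw [List.length_append, hhdlen, htlen]
        have hp2 : p' < r.sum := htlen ▸ hp'
        have hq2 : q' < r.sum := htlen ▸ hq'
        refine ⟨a + p', a + q', by rw [hlenapp]; omega,
          by rw [hlenapp]; omega, by omega, by omega, ?_⟩
        rw [List.getElem_append_right (by omega), List.getElem_append_right (by omega)]
        simp only [hhdlen]
        have e1 : a + p' - a = p' := by omega
        have e2 : a + q' - a = q' := by omega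
        simp_rw [e1, e2]
        exact hA
    · -- C2
      intro g hb p q hp hq hpg hgq
      rw [isBnd_cons hposr] at hb
      have hsep : ∀ (p' q' : ℕ) (hp' : p' < (hd++tl).length) (hq' : q' < (hd++tl).length),
          p' < a → a ≤ q' → ¬ A ((hd++tl)[p']'hp') ((hd++tl)[q']'hq') := by
        intro p' q' hp' hq' hpa haq hA
        have hval1 : (hd++tl)[p']'hp' ∈ S := by
          rw [List.getElem_append_left (by omega)]
          exact (hhdmem _).mp (List.getElem_mem (by omega))
        have hval2 : (hd++tl)[q']'hq' ∈ tl := by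
          rw [List.getElem_append_right (by rw [hhdlen]; omega)]
          exact List.getElem_mem _
        have hb1 := (hSbnd _ hval1).2
        have hb2 := (htbnd _ hval2).1
        have hsh := hshort _ _ hA
        have e1 : 4 * ℓ * (j + 1) = 4 * ℓ * j + 4 * ℓ := by ring
        omega
      rcases hb with ⟨hrne, rfl⟩ | ⟨hag, hbr⟩
      · exact hsep p q hp hq hpg hgq
      · by_cases hpa : p < a
        · exact hsep p q hp hq hpa (by omega)
        · push_neg at hpa
          intro hA
          have hlenapp : (hd ++ tl).length = a + r.sum := by
            rw [List.length_append, hhdlen, htlen]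
          have hq0 : q < a + r.sum := hlenapp ▸ hq
          have hp0 : p < a + r.sum := hlenapp ▸ hp
          have hq' : q - a < tl.length := by rw [htlen]; omega
          have hp'' : p - a < tl.length := by rw [htlen]; omega
          refine htC2 (g - a) hbr (p - a) (q - a) hp'' hq' (by omega) (by omega) ?_
          have e1 : (hd++tl)[p]'hp = tl[p-a]'hp'' := by
            rw [List.getElem_append_right (by omega)]; simp [hhdlen]
          have e2 : (hd++tl)[q]'hq = tl[q-a]'hq' := by
            rw [List.getElem_append_right (by omega)]; simp [hhdlen]
          rw [← e1, ← e2]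
          exact hA

end Chain

end BBMaux

/-- **Lemma.**  If `G` is `ℓ`-empty and its irreducible block decomposition contains a
block of size at least `4kℓ`, then `S_n(G) ≥ F_{n,ℓ}` for each `n ≤ k`. -/
theorem big_irreducible_block (N k ℓ : ℕ) (hk : 1 ≤ k) (hℓ : 1 ≤ ℓ)
    (G : SimpleGraph (Fin N)) (hG : lEmpty G ℓ) (s : ℕ) (sz : Fin s → ℕ)
    (Gs : ∀ i, SimpleGraph (Fin (sz i))) (hdec : IsIrredDecomp G sz Gs)
    (hbig : ∃ i : Fin s, 4 * k * ℓ ≤ sz i) :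
    ∀ n : ℕ, n ≤ k → genFib ℓ n ≤ numSub G n := by
  classical
  open BBMaux in
  obtain ⟨i0, hi0⟩ := hbig
  set c := ∑ j ∈ Finset.univ.filter (fun j => j < i0), sz j with hc
  set m := sz i0 with hmdef
  set A : ℕ → ℕ → Prop := fun u v =>
    u < v ∧ ∃ (hu : u < N) (hv : v < N), G.Adj ⟨u, hu⟩ ⟨v, hv⟩ with hA
  have hcm : c + m ≤ N := by
    rw [hdec.1.1]
    have h1 : insert i0 (Finset.univ.filter (fun j => j < i0)) ⊆ Finset.univ :=
      Finset.subset_univ _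
    have h2 := Finset.sum_le_sum_of_subset (f := sz) h1
    rw [Finset.sum_insert (by simp)] at h2
    omega
  have hshort : ∀ u v, A u v → u < v ∧ v < u + ℓ := by
    rintro u v ⟨huv, hu, hv, hadj⟩
    refine ⟨huv, ?_⟩
    have := hG _ _ hadj
    simp only [Fin.val_mk] at this
    omega
  have hcross : ∀ g, c ≤ g → g + 1 < c + m →
      ∃ u v, c ≤ u ∧ u ≤ g ∧ g < v ∧ v < c + m ∧ A u v := by
    intro g hg1 hg2
    have hirr := hdec.2.2 i0
    rw [IrredGraph] at hirr
    have hne : ¬ ∀ (x y : Fin m), x < y → (Gs i0).Adj x y →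
        ((y : ℕ) ≤ g - c ∨ (g - c + 1) ≤ (x : ℕ)) := by
      intro hall
      exact hirr ⟨⟨g - c, by omega⟩, ⟨g - c + 1, by omega⟩, by simp [Fin.lt_def],
        fun x y hxy hadj => hall x y hxy hadj⟩
    push_neg at hne
    obtain ⟨x, y, hxy, hadj, hy, hx⟩ := hne
    have hGadj : G.Adj ⟨c + x, by omega⟩ ⟨c + y, by omega⟩ := by
      rw [(hdec.1.2 _ _)]
      exact ⟨i0, x, y, hadj, by simp [hc], by simp [hc]⟩
    have hxy' : (x : ℕ) < (y : ℕ) := hxy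
    exact ⟨c + x, c + y, by omega, by omega, by omega, by omega,
      ⟨by omega, by omega, by omega, hGadj⟩⟩
  have hwin := window A ℓ c m k hℓ hi0 hshort hcross
  intro n hn
  -- key existence, per composition
  have key : ∀ L ∈ comps ℓ n, ∃ H : SimpleGraph (Fin n), IndSub H G ∧
      ∀ g : ℕ, isBnd L g ↔ (0 < g ∧ g < n ∧
        ¬ ∃ p q : Fin n, H.Adj p q ∧ (p : ℕ) < g ∧ g ≤ (q : ℕ)) := by
    intro L hL
    obtain ⟨hparts, hsum⟩ := mem_comps hL
    have hpos : ∀ a ∈ L, 1 ≤ a := fun a ha => (hparts a ha).1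
    have hLk : L.length ≤ k := le_trans (len_le_sum hpos) (by omega)
    obtain ⟨lV, hlen, hsorted, hbounds, hC1, hC2⟩ :=
      build A ℓ c k hℓ hshort hwin L 0 hparts (by omega)
    rw [hsum] at hlen
    have hvN : ∀ (p : ℕ) (hp : p < lV.length), lV[p] < N := by
      intro p hp
      obtain ⟨hb1, hb2⟩ := hbounds _ (List.getElem_mem hp)
      have e1 : 4 * ℓ * (0 + L.length) ≤ 4 * k * ℓ := by
        have : 4 * ℓ * (0 + L.length) ≤ 4 * ℓ * k := Nat.mul_le_mul_left _ (by omega)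
        have e : 4 * ℓ * k = 4 * k * ℓ := by ring
        omega
      omega
    set f : Fin n → Fin N := fun i => ⟨lV[(i : ℕ)]'(by omega), hvN _ (by omega)⟩ with hf
    have hmono : StrictMono f := by
      intro i j hij
      have h2 := hsorted.rel_get_of_lt
        (show (⟨(i : ℕ), by omega⟩ : Fin lV.length) < ⟨(j : ℕ), by omega⟩ from
          Fin.mk_lt_mk.mpr hij)
      simp only [List.get_eq_getElem] at h2
      exact Fin.mk_lt_mk.mpr h2
    set H : SimpleGraph (Fin n) :=
      { Adj := fun i j => G.Adj (f i) (f j),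
        symm := ⟨fun i j h => G.symm.symm _ _ h⟩,
        loopless := ⟨fun i h => G.loopless.irrefl _ h⟩ } with hH
    refine ⟨H, ⟨OrderEmbedding.ofStrictMono f hmono, fun i j => Iff.rfl⟩, ?_⟩
    intro g
    constructor
    · intro hb
      have hposg := isBnd_pos hpos hb
      rw [hsum] at hposg
      refine ⟨hposg.1, hposg.2, ?_⟩
      rintro ⟨p, q, hadj, h1, h2⟩
      have hAval : A (lV[(p : ℕ)]'(by omega)) (lV[(q : ℕ)]'(by omega)) := by
        refine ⟨?_, hvN _ _, hvN _ _, hadj⟩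
        have h3 := hsorted.rel_get_of_lt
          (show (⟨(p : ℕ), by omega⟩ : Fin lV.length) < ⟨(q : ℕ), by omega⟩ from
            Fin.mk_lt_mk.mpr (by omega))
        simpa only [List.get_eq_getElem] using h3
      exact hC2 g hb (p : ℕ) (q : ℕ) (by omega) (by omega) h1 h2 hAval
    · rintro ⟨hg0, hgn, hne⟩
      by_contra hnb
      obtain ⟨p, q, hp, hq, h1, h2, hAval⟩ := hC1 g hg0 (by omega) hnb
      exact hne ⟨⟨p, by omega⟩, ⟨q, by omega⟩, hAval.2.2.2, h1, h2⟩
  choose! F hF1 hF2 using key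
  have hfin : {H : SimpleGraph (Fin n) | IndSub H G}.Finite := Set.toFinite _
  have hinj : Set.InjOn F (comps ℓ n : Set (List ℕ)) := by
    intro L1 h1 L2 h2 heq
    simp only [Finset.mem_coe] at h1 h2
    obtain ⟨hp1, hs1⟩ := mem_comps h1
    obtain ⟨hp2, hs2⟩ := mem_comps h2
    refine comp_unique L1 L2 (fun a ha => (hp1 a ha).1) (fun a ha => (hp2 a ha).1)
      (by rw [hs1, hs2]) ?_
    intro g
    rw [hF2 L1 h1 g, heq, ← hF2 L2 h2 g]
  have hcard : (comps ℓ n).card ≤ hfin.toFinset.card := by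
    apply Finset.card_le_card_of_injOn F
    · intro L hL
      rw [Finset.mem_coe, Set.Finite.mem_toFinset]
      exact hF1 L hL
    · intro L1 h1 L2 h2 heq
      exact hinj (by simpa using h1) (by simpa using h2) heq
  rw [comps_card] at hcard
  rw [numSub, Set.ncard_eq_toFinset_card _ hfin]
  exact hcard
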